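/- arXiv:1905.13369 — 2 statements merged into one kernel-verified Lean document; each statement's English description precedes it below -/
import Mathlib

section
/- WKD-IBE decryption correctness: if a ciphertext C = (e(g₁,g₂)^s · m, g^s, Q_S^s) is produced by encrypting m ∈ G_T under pattern S with randomness s, and K = (g₂^α · Q_S^r, g^r, ·) is a private key for the same pattern S with randomness r, where g₁ = g^α and Q_S = g₃ · ∏_{(i,aᵢ)∈fixed(S)} hᵢ^{aᵢ}, then X · e(k₁, Z) · e(Y, k₀)⁻¹ = m, where C = (X, Y, Z), k₀ = g₂^α · Q_S^r, k₁ = g^r. -/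
/-- Exponentiation of a group element by an element of `ZMod p`
(well-defined for groups of order `p`). -/
def zpModPow {p : ℕ} {G : Type*} [Monoid G] (x : G) (a : ZMod p) : G :=
  x ^ a.val

/-! The blinding factor `e(g₂, g₁)^s` of the ciphertext equals `e(g₂^α, g^s)`, the part of
`e(k₀, Y)` coming from `g₂^α`; the rest of `e(k₀, Y)`, namely `e(Q_S^r, g^s)`, equals
`e(Z, k₁) = e(Q_S^s, g^r)` because both are `e(Q_S, g)^{rs}`. So the two pairings cancel the
blinding factor exactly. -/

lemma zpModPow_one {p : ℕ} (hp : 1 < p) {G : Type*} [Monoid G] (x : G) :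
    zpModPow x (1 : ZMod p) = x := by
  have : Fact (1 < p) := ⟨hp⟩
  simp [zpModPow, ZMod.val_one]

def IsZModBilinear (p : ℕ) {G₁ G₂ GT : Type*} [Monoid G₁] [Monoid G₂] [Monoid GT]
    (e : G₁ → G₂ → GT) : Prop :=
  ∀ (a : G₁) (b : G₂) (x y : ZMod p), e (zpModPow a x) (zpModPow b y) = zpModPow (e a b) (x * y)

namespace IsZModBilinear

variable {p : ℕ} {G₁ G₂ GT : Type*} [Monoid G₁] [Monoid G₂] [Monoid GT] {e : G₁ → G₂ → GT}

lemma zpModPow_left (he : IsZModBilinear p e) (hp : 1 < p) (a : G₁) (b : G₂) (x : ZMod p) :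
    e (zpModPow a x) b = zpModPow (e a b) x := by
  simpa only [zpModPow_one hp, mul_one] using he a b x 1

lemma zpModPow_right (he : IsZModBilinear p e) (hp : 1 < p) (a : G₁) (b : G₂) (y : ZMod p) :
    e a (zpModPow b y) = zpModPow (e a b) y := by
  simpa only [zpModPow_one hp, one_mul] using he a b 1 y

lemma zpModPow_swap (he : IsZModBilinear p e) (a : G₁) (b : G₂) (x y : ZMod p) :
    e (zpModPow a x) (zpModPow b y) = e (zpModPow a y) (zpModPow b x) := by
  rw [he, he, mul_comm]

/-- Only exponents on the arguments of `e` may be combined: nothing makes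
`zpModPow (zpModPow x a) b = zpModPow x (a * b)` hold outside groups of exponent `p`. -/
lemma zpModPow_zpModPow_right (he : IsZModBilinear p e) (hp : 1 < p) (a : G₁) (b : G₂)
    (x y : ZMod p) :
    zpModPow (e a (zpModPow b x)) y = e (zpModPow a x) (zpModPow b y) := by
  rw [he.zpModPow_right hp, ← he.zpModPow_left hp, he.zpModPow_right hp]

end IsZModBilinear

theorem wkdibe_decrypt_correct_general {p : ℕ} (hp : p.Prime)
    {G₁ G₂ GT : Type*} [CommGroup G₁] [CommGroup G₂] [CommGroup GT]
    (e : G₁ → G₂ → GT)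
    (hbil : ∀ (a : G₁) (b : G₂) (x y : ZMod p),
      e (zpModPow a x) (zpModPow b y) = zpModPow (e a b) (x * y))
    (hmulL : ∀ (a a' : G₁) (b : G₂), e (a * a') b = e a b * e a' b)
    (g : G₂) (g₂ : G₁)
    (α : ZMod p) (g₁ : G₂) (hg₁ : g₁ = zpModPow g α)
    (QS : G₁)
    (m : GT) (s r : ZMod p)
    (X : GT) (Y : G₂) (Z : G₁) (k₀ : G₁) (k₁ : G₂)
    (hX : X = zpModPow (e g₂ g₁) s * m)
    (hY : Y = zpModPow g s)
    (hZ : Z = zpModPow QS s)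
    (hk₀ : k₀ = zpModPow g₂ α * zpModPow QS r)
    (hk₁ : k₁ = zpModPow g r) :
    X * e Z k₁ * (e k₀ Y)⁻¹ = m := by
  have he : IsZModBilinear p e := hbil
  subst hg₁ hX hY hZ hk₀ hk₁
  rw [he.zpModPow_zpModPow_right hp.one_lt, hmulL, he.zpModPow_swap QS g s r]
  rw [mul_inv_eq_iff_eq_mul, mul_right_comm, mul_comm]

/-- WKD-IBE decryption correctness: if `C = (e(g₁,g₂)^s · m, g^s, Q_S^s)` encrypts
`m ∈ G_T` under pattern `S` with randomness `s`, and `K = (g₂^α · Q_S^r, g^r, ·)`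
is a key for the same pattern `S` (where `g₁ = g^α` and
`Q_S = g₃ · ∏_{(i,aᵢ)∈fixed(S)} hᵢ^{aᵢ}`), then `X · e(k₁, Z) · e(Y, k₀)⁻¹ = m`. -/
theorem wkdibe_decrypt_correct {p : ℕ} (hp : p.Prime)
    {G₁ G₂ GT : Type*} [CommGroup G₁] [CommGroup G₂] [CommGroup GT]
    (e : G₁ → G₂ → GT)
    (hbil : ∀ (a : G₁) (b : G₂) (x y : ZMod p),
      e (zpModPow a x) (zpModPow b y) = zpModPow (e a b) (x * y))
    (hmulL : ∀ (a a' : G₁) (b : G₂), e (a * a') b = e a b * e a' b)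
    (hmulR : ∀ (a : G₁) (b b' : G₂), e a (b * b') = e a b * e a b')
    {ℓ : ℕ} (g : G₂) (g₂ g₃ : G₁) (h : Fin ℓ → G₁)
    (α : ZMod p) (g₁ : G₂) (hg₁ : g₁ = zpModPow g α)
    (S : Fin ℓ → Option (ZMod p)) (QS : G₁)
    (hQS : QS = g₃ * ∏ i ∈ Finset.univ.filter (fun i => (S i).isSome),
      zpModPow (h i) ((S i).getD 0))
    (m : GT) (s r : ZMod p)
    (X : GT) (Y : G₂) (Z : G₁) (k₀ : G₁) (k₁ : G₂)
    (hX : X = zpModPow (e g₂ g₁) s * m)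
    (hY : Y = zpModPow g s)
    (hZ : Z = zpModPow QS s)
    (hk₀ : k₀ = zpModPow g₂ α * zpModPow QS r)
    (hk₁ : k₁ = zpModPow g r) :
    X * e Z k₁ * (e k₀ Y)⁻¹ = m :=
  wkdibe_decrypt_correct_general hp e hbil hmulL g g₂ α g₁ hg₁ QS m s r X Y Z k₀ k₁ hX hY hZ hk₀ hk₁
end

section
/- In the Complete Subtree method, to cover all but r revoked leaves of a complete binary tree with n = 2^d leaves using disjoint complete subtrees, at most r·d subtrees suffice (and more precisely O(r·log(n/r)) suffice); formally: for any set R of r ≥ 1 leaves of the depth-d binary tree, the complement [0, 2^d) \ R can be partitioned into at most r·d dyadic intervals. -/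
/-!
Pass from the leaves to their parents: the set `R' = R / 2` of parents of revoked leaves is a
nonempty revoked set of the tree of depth `d - 1` with `|R'| ≤ |R|`. Doubling every interval of a
partition of the complement of `R'` partitions the leaves whose parent is not in `R'`; every other
unrevoked leaf is the sibling of a revoked one, so at most `|R|` singletons finish the partition.
Each level thus adds at most `|R|` intervals.
-/

open Finset

section DisjointCover

variable {ι κ α β : Type*} [DecidableEq α] [DecidableEq β]

def IsDisjointCover (I : ι → Finset α) (D : Finset ι) (S : Finset α) : Prop :=
  (D : Set ι).PairwiseDisjoint I ∧ D.biUnion I = S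

theorem isDisjointCover_singleton (s : Finset α) : IsDisjointCover singleton s s :=
  ⟨fun _ _ _ _ hne => Finset.disjoint_singleton.2 hne, biUnion_singleton_eq_self⟩

theorem IsDisjointCover.union [DecidableEq ι] {I : ι → Finset α} {D₁ D₂ : Finset ι}
    {S₁ S₂ : Finset α} (h₁ : IsDisjointCover I D₁ S₁) (h₂ : IsDisjointCover I D₂ S₂)
    (hS : Disjoint S₁ S₂) : IsDisjointCover I (D₁ ∪ D₂) (S₁ ∪ S₂) := by
  refine ⟨?_, by rw [union_biUnion, h₁.2, h₂.2]⟩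
  rw [coe_union, Set.pairwiseDisjoint_union]
  refine ⟨h₁.1, h₂.1, fun i hi j hj _ => hS.mono ?_ ?_⟩
  · exact h₁.2 ▸ subset_biUnion_of_mem I hi
  · exact h₂.2 ▸ subset_biUnion_of_mem I hj

theorem IsDisjointCover.image [DecidableEq κ] {I : κ → Finset α} {g : ι → κ} {D : Finset ι}
    {S : Finset α} (hg : Set.InjOn g D) (h : IsDisjointCover (I ∘ g) D S) :
    IsDisjointCover I (D.image g) S :=
  ⟨by rw [coe_image, hg.pairwiseDisjoint_image]; exact h.1, by rw [image_biUnion]; exact h.2⟩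

theorem IsDisjointCover.comap {I : ι → Finset α} {J : ι → Finset β} {D : Finset ι}
    {S : Finset α} {T : Finset β} (φ : β → α) (h : IsDisjointCover I D S)
    (hJ : ∀ q x, x ∈ J q ↔ φ x ∈ I q) (hT : ∀ x, x ∈ T ↔ φ x ∈ S) :
    IsDisjointCover J D T := by
  refine ⟨fun q hq q' hq' hne => ?_, ?_⟩
  · refine Finset.disjoint_left.2 fun x hx hx' => ?_
    rw [hJ] at hx hx'
    exact Finset.disjoint_left.1 (h.1 hq hq' hne) hx hx'
  · ext x
    simp only [mem_biUnion, hJ, hT, ← h.2]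

end DisjointCover

namespace CompleteSubtree

def dyadic (q : ℕ × ℕ) : Finset ℕ :=
  Ico (q.2 * 2 ^ q.1) ((q.2 + 1) * 2 ^ q.1)

def succLevel (q : ℕ × ℕ) : ℕ × ℕ := (q.1 + 1, q.2)

def sibling (x : ℕ) : ℕ := 2 * (x / 2) + (1 - x % 2)

theorem succLevel_injective : Function.Injective succLevel := by
  rintro ⟨k, j⟩ ⟨k', j'⟩ h
  simp_all [succLevel]

theorem sibling_eq_iff {x y : ℕ} : sibling y = x ↔ y / 2 = x / 2 ∧ y ≠ x := by
  unfold sibling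
  omega

theorem dyadic_zero (x : ℕ) : dyadic (0, x) = {x} := by
  simp [dyadic]

theorem mem_dyadic_succLevel (q : ℕ × ℕ) (x : ℕ) :
    x ∈ dyadic (succLevel q) ↔ x / 2 ∈ dyadic q := by
  simp only [dyadic, succLevel, mem_Ico, pow_succ, ← mul_assoc, Nat.le_div_iff_mul_le two_pos,
    Nat.div_lt_iff_lt_mul two_pos]

theorem le_and_lt_of_dyadic_subset_range {d : ℕ} {q : ℕ × ℕ} (h : dyadic q ⊆ range (2 ^ d)) :
    q.1 ≤ d ∧ q.2 < 2 ^ (d - q.1) := by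
  obtain ⟨k, j⟩ := q
  have hpos : 0 < 2 ^ k := by positivity
  rw [dyadic, range_eq_Ico, Ico_subset_Ico_iff (by nlinarith)] at h
  have hk : k ≤ d :=
    (Nat.pow_le_pow_iff_right one_lt_two).1 (le_trans (by nlinarith) h.2)
  refine ⟨hk, Nat.lt_of_succ_le (Nat.le_of_mul_le_mul_right ?_ hpos)⟩
  rw [← pow_add, Nat.sub_add_cancel hk]
  exact h.2

theorem range_sdiff_eq_union (d : ℕ) (R : Finset ℕ) (hR : R ⊆ range (2 ^ (d + 1))) :
    range (2 ^ (d + 1)) \ R =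
      {x ∈ range (2 ^ (d + 1)) | x / 2 ∉ R.image (· / 2)} ∪ (R.image sibling \ R) := by
  have hpow : 2 ^ (d + 1) = 2 * 2 ^ d := pow_succ' 2 d
  ext x
  simp only [mem_sdiff, mem_union, mem_filter, mem_range, mem_image, sibling_eq_iff]
  constructor
  · rintro ⟨hx, hxR⟩
    by_cases hpar : ∃ y ∈ R, y / 2 = x / 2
    · obtain ⟨y, hy, hyx⟩ := hpar
      exact Or.inr ⟨⟨y, hy, hyx, fun h => hxR (h ▸ hy)⟩, hxR⟩
    · exact Or.inl ⟨hx, hpar⟩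
  · rintro (⟨hx, hpar⟩ | ⟨⟨y, hy, hyx, -⟩, hxR⟩)
    · exact ⟨hx, fun hxR => hpar ⟨x, hxR, rfl⟩⟩
    · have := mem_range.1 (hR hy)
      exact ⟨by omega, hxR⟩

theorem disjoint_filter_parent_sibling (d : ℕ) (R : Finset ℕ) :
    Disjoint {x ∈ range (2 ^ (d + 1)) | x / 2 ∉ R.image (· / 2)} (R.image sibling \ R) := by
  refine Finset.disjoint_left.2 fun x hx hx' => ?_
  obtain ⟨y, hy, hyx⟩ := mem_image.1 (mem_sdiff.1 hx').1
  exact (mem_filter.1 hx).2 (mem_image.2 ⟨y, hy, (sibling_eq_iff.1 hyx).1⟩)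

theorem exists_isDisjointCover_dyadic (d : ℕ) (R : Finset ℕ) (hR : R ⊆ range (2 ^ d))
    (hne : R.Nonempty) :
    ∃ D : Finset (ℕ × ℕ), D.card ≤ R.card * d ∧ IsDisjointCover dyadic D (range (2 ^ d) \ R) := by
  induction d generalizing R with
  | zero =>
    obtain ⟨x, hx⟩ := hne
    have hsub : range (2 ^ 0) ⊆ R := by
      simpa [show x = 0 by simpa using hR hx] using hx
    exact ⟨∅, by simp, by simp [IsDisjointCover, (sdiff_eq_empty_iff_subset.2 hsub).symm]⟩
  | succ d ih =>
    set R' := R.image (· / 2)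
    have hR' : R' ⊆ range (2 ^ d) := by
      intro y hy
      obtain ⟨x, hx, rfl⟩ := mem_image.1 hy
      have := mem_range.1 (hR hx)
      exact mem_range.2 (Nat.div_lt_of_lt_mul (by rwa [← pow_succ']))
    obtain ⟨D', hcard, hD'⟩ := ih R' hR' (hne.image _)
    have hlift : IsDisjointCover dyadic (D'.image succLevel)
        {x ∈ range (2 ^ (d + 1)) | x / 2 ∉ R'} := by
      refine IsDisjointCover.image succLevel_injective.injOn
        (hD'.comap (· / 2) mem_dyadic_succLevel fun x => ?_)
      simp only [mem_filter, mem_sdiff, mem_range, pow_succ, Nat.div_lt_iff_lt_mul two_pos]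
    have hleaves : IsDisjointCover dyadic ((R.image sibling \ R).image (0, ·))
        (R.image sibling \ R) :=
      IsDisjointCover.image (Prod.mk_right_injective 0).injOn
        (by simpa [Function.comp_def, dyadic_zero] using isDisjointCover_singleton _)
    refine ⟨_, ?_, range_sdiff_eq_union d R hR ▸
      hlift.union hleaves (disjoint_filter_parent_sibling d R)⟩
    calc _ ≤ (D'.image succLevel).card + ((R.image sibling \ R).image (0, ·)).card :=
          card_union_le _ _
      _ ≤ D'.card + R.card :=
          add_le_add card_image_le
            (card_image_le.trans ((card_le_card sdiff_subset).trans card_image_le))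
      _ ≤ R'.card * d + R.card := by omega
      _ ≤ R.card * (d + 1) := by nlinarith [card_image_le (s := R) (f := (· / 2))]

end CompleteSubtree

open CompleteSubtree in
/-- Complete Subtree cover bound: for any nonempty set `R` of `r` revoked
leaves of the depth-`d` binary tree (leaves identified with `[0, 2^d)`),
the complement `[0, 2^d) \ R` can be partitioned into at most `r·d`
dyadic intervals. A pair `(k, j)` encodes the dyadic interval
`[j·2^k, (j+1)·2^k)` of level `k ≤ d` with `j < 2^(d-k)`. -/
theorem cs_cover_bound (d : ℕ) (R : Finset ℕ)
    (hR : R ⊆ Finset.range (2 ^ d)) (hr : 1 ≤ R.card) :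
    ∃ D : Finset (ℕ × ℕ),
      D.card ≤ R.card * d ∧
      (∀ q ∈ D, q.1 ≤ d ∧ q.2 < 2 ^ (d - q.1)) ∧
      (D : Set (ℕ × ℕ)).PairwiseDisjoint
        (fun q => Finset.Ico (q.2 * 2 ^ q.1) ((q.2 + 1) * 2 ^ q.1)) ∧
      D.biUnion (fun q => Finset.Ico (q.2 * 2 ^ q.1) ((q.2 + 1) * 2 ^ q.1))
        = Finset.range (2 ^ d) \ R := by
  obtain ⟨D, hcard, hdisj, hunion⟩ :=
    exists_isDisjointCover_dyadic d R hR (card_pos.1 hr)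
  refine ⟨D, hcard, fun q hq => le_and_lt_of_dyadic_subset_range ?_, hdisj, hunion⟩
  exact (subset_biUnion_of_mem dyadic hq).trans (hunion ▸ sdiff_subset)
end
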